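/- The infinite program E2 consisting of the fact even(0), the rules even(n+2) :- even(n) for all n ∈ ℕ, and the rule q :- card{X : even(X)} > 0, has exactly one Alog answer set, namely {even(2k) : k ∈ ℕ} (not containing q). -/
import Mathlib


/-- Atoms of program E2: `q` and `even n` for `n : ℕ`. -/
inductive AtomE2 : Type
  | q : AtomE2
  | even : ℕ → AtomE2
deriving DecidableEq

/-- The aggregate `card{X:even(X)} > 0` is defined and true in `A` iff the witness set
`{n | even n ∈ A}` is finite (aggregates range over natural numbers) and has
cardinality greater than 0. -/
def CardAggTrueE2 (A : Set AtomE2) : Prop :=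
  {n | AtomE2.even n ∈ A}.Finite ∧ 0 < {n | AtomE2.even n ∈ A}.ncard

/-- `B` satisfies the Alog set reduct of
E2 = { even(0).  even(n+2) :- even(n) (for all n).  q :- card{X:even(X)} > 0 }
w.r.t. `A`: the last rule is removed if its aggregate is false or undefined in `A`
(in particular whenever the witness set is infinite); otherwise the aggregate is
replaced by the body `{even n : even n ∈ A}`. -/
def SatisfiesReductE2 (A B : Set AtomE2) : Prop :=
  AtomE2.even 0 ∈ B ∧
  (∀ n, AtomE2.even n ∈ B → AtomE2.even (n + 2) ∈ B) ∧
  (CardAggTrueE2 A → ((∀ n, AtomE2.even n ∈ A → AtomE2.even n ∈ B) → AtomE2.q ∈ B))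

/-- `A` is an Alog answer set of E2: a minimal model of the set reduct of E2 w.r.t. `A`. -/
def IsAnswerSetE2 (A : Set AtomE2) : Prop :=
  SatisfiesReductE2 A A ∧ ∀ B ⊂ A, ¬ SatisfiesReductE2 A B

lemma evens_mem {A B : Set AtomE2} (h : SatisfiesReductE2 A B) :
    ∀ k, AtomE2.even (2 * k) ∈ B := by
  intro k
  induction k with
  | zero => exact h.1
  | succ n ih =>
      have := h.2.1 _ ih
      have e : 2 * (n + 1) = 2 * n + 2 := by ring
      rwa [e]

lemma not_agg {A B : Set AtomE2} (h : SatisfiesReductE2 A B) (hBA : B ⊆ A) :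
    ¬ CardAggTrueE2 A := by
  intro ⟨hfin, _⟩
  have hinf : {n | AtomE2.even n ∈ A}.Infinite := by
    apply Set.infinite_of_injective_forall_mem (f := fun k : ℕ => 2 * k)
    · intro a b hab; simp only at hab; omega
    · intro k; exact hBA (evens_mem h k)
  exact hinf hfin

lemma E_sat (A : Set AtomE2) (hA : ¬ CardAggTrueE2 A) :
    SatisfiesReductE2 A {a | ∃ k, a = AtomE2.even (2 * k)} := by
  refine ⟨⟨0, by norm_num⟩, ?_, fun h => absurd h hA⟩
  rintro n ⟨k, hk⟩
  cases hk
  exact ⟨k + 1, by ring_nf⟩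

/-- E2 has exactly one Alog answer set, namely `{even(2k) : k ∈ ℕ}` (not containing `q`). -/
theorem E2_unique_answer_set :
    ∀ A : Set AtomE2, IsAnswerSetE2 A ↔ A = {a | ∃ k, a = AtomE2.even (2 * k)} := by
  intro A
  constructor
  · rintro ⟨hsat, hmin⟩
    have hna : ¬ CardAggTrueE2 A := not_agg hsat (subset_refl A)
    set E : Set AtomE2 := {a | ∃ k, a = AtomE2.even (2 * k)} with hE
    have hEsat : SatisfiesReductE2 A E := E_sat A hna
    have hEsub : E ⊆ A := by
      rintro a ⟨k, rfl⟩
      exact evens_mem hsat k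
    by_contra hne
    exact hmin E ⟨hEsub, fun h => hne (subset_antisymm h hEsub)⟩ hEsat
  · rintro rfl
    set E : Set AtomE2 := {a | ∃ k, a = AtomE2.even (2 * k)} with hE
    have hna : ¬ CardAggTrueE2 E := by
      intro ⟨hfin, _⟩
      have hinf : {n | AtomE2.even n ∈ E}.Infinite := by
        apply Set.infinite_of_injective_forall_mem (f := fun k : ℕ => 2 * k)
        · intro a b hab; simp only at hab; omega
        · intro k; exact ⟨k, rfl⟩
      exact hinf hfin
    refine ⟨E_sat E hna, ?_⟩
    intro B hB hBsat
    apply hB.2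
    rintro a ⟨k, rfl⟩
    exact evens_mem hBsat k
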